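/- Let α₁,α₂,α₃,ε ∈ ℝ and let (x₁,x₂,x₃,x̃₁,x̃₂,x̃₃) ∈ ℝ⁶ satisfy the dET equations x̃₁ − x₁ = εα₁(x̃₂x₃ + x₂x̃₃), x̃₂ − x₂ = εα₂(x̃₃x₁ + x₃x̃₁), x̃₃ − x₃ = εα₃(x̃₁x₂ + x₁x̃₂). Assume 1 − ε²α₂α₃x₁² ≠ 0, 1 − ε²α₃α₁x₂² ≠ 0, 1 − ε²α₁α₂x₃² ≠ 0 and the same for the tilded variables. Then F₁ = (1 − ε²α₃α₁x₂²)/(1 − ε²α₁α₂x₃²), F₂ = (1 − ε²α₁α₂x₃²)/(1 − ε²α₂α₃x₁²) and F₃ = (1 − ε²α₂α₃x₁²)/(1 − ε²α₃α₁x₂²) are conserved quantities: F_i(x̃) = F_i(x) for i = 1,2,3. -/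
import Mathlib


/-- The functions `Fᵢ` are conserved quantities of the Hirota–Kimura
discretization dET of the Euler top. -/
theorem dET_F_integrals (a1 a2 a3 ε x1 x2 x3 xt1 xt2 xt3 : ℝ)
    (h1 : xt1 - x1 = ε * a1 * (xt2 * x3 + x2 * xt3))
    (h2 : xt2 - x2 = ε * a2 * (xt3 * x1 + x3 * xt1))
    (h3 : xt3 - x3 = ε * a3 * (xt1 * x2 + x1 * xt2))
    (hd1 : 1 - ε ^ 2 * a2 * a3 * x1 ^ 2 ≠ 0)
    (hd2 : 1 - ε ^ 2 * a3 * a1 * x2 ^ 2 ≠ 0)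
    (hd3 : 1 - ε ^ 2 * a1 * a2 * x3 ^ 2 ≠ 0)
    (hdt1 : 1 - ε ^ 2 * a2 * a3 * xt1 ^ 2 ≠ 0)
    (hdt2 : 1 - ε ^ 2 * a3 * a1 * xt2 ^ 2 ≠ 0)
    (hdt3 : 1 - ε ^ 2 * a1 * a2 * xt3 ^ 2 ≠ 0) :
    (1 - ε ^ 2 * a3 * a1 * xt2 ^ 2) / (1 - ε ^ 2 * a1 * a2 * xt3 ^ 2)
        = (1 - ε ^ 2 * a3 * a1 * x2 ^ 2) / (1 - ε ^ 2 * a1 * a2 * x3 ^ 2) ∧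
    (1 - ε ^ 2 * a1 * a2 * xt3 ^ 2) / (1 - ε ^ 2 * a2 * a3 * xt1 ^ 2)
        = (1 - ε ^ 2 * a1 * a2 * x3 ^ 2) / (1 - ε ^ 2 * a2 * a3 * x1 ^ 2) ∧
    (1 - ε ^ 2 * a2 * a3 * xt1 ^ 2) / (1 - ε ^ 2 * a3 * a1 * xt2 ^ 2)
        = (1 - ε ^ 2 * a2 * a3 * x1 ^ 2) / (1 - ε ^ 2 * a3 * a1 * x2 ^ 2) := by
  refine ⟨?_, ?_, ?_⟩
  · rw [div_eq_div_iff hdt3 hd3]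
    linear_combination (ε^3*a1*a2*a3*(x2*xt3 - xt2*x3)) * h1
      - (ε^2*a3*a1*(xt2 + x2)) * h2 + (ε^2*a1*a2*(xt3 + x3)) * h3
  · rw [div_eq_div_iff hdt1 hd1]
    linear_combination (ε^3*a1*a2*a3*(x3*xt1 - xt3*x1)) * h2
      - (ε^2*a1*a2*(xt3 + x3)) * h3 + (ε^2*a2*a3*(xt1 + x1)) * h1
  · rw [div_eq_div_iff hdt2 hd2]
    linear_combination (ε^3*a1*a2*a3*(x1*xt2 - xt1*x2)) * h3
      - (ε^2*a2*a3*(xt1 + x1)) * h1 + (ε^2*a3*a1*(xt2 + x2)) * h2
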